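/- Let C_a and C_b be comparator networks on n channels of the same size such that C_a subsumes C_b. If there exists a sorting network of the form C_b;C of size k, then there also exists a sorting network of the form C_a;C' of size k. -/

import Mathlib

/-- Applying a single comparator `c = (i, j)`: the minimum of the two values goes to
channel `i` and the maximum to channel `j`. -/
def applyComp {n : ℕ} {α : Type*} [LinearOrder α] (c : Fin n × Fin n) (x : Fin n → α) :
    Fin n → α :=
  fun k => if k = c.1 then min (x c.1) (x c.2)
    else if k = c.2 then max (x c.1) (x c.2)
    else x k

/-- Propagating an input vector through a comparator network (a list of comparators). -/
def runNet {n : ℕ} {α : Type*} [LinearOrder α] (C : List (Fin n × Fin n)) (x : Fin n → α) :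
    Fin n → α :=
  C.foldl (fun v c => applyComp c v) x

/-- A standard comparator network: every comparator `(i, j)` satisfies `i < j`. -/
def Standard {n : ℕ} (C : List (Fin n × Fin n)) : Prop :=
  ∀ c ∈ C, c.1 < c.2

/-- A sorting network: a standard comparator network sorting every Boolean input. -/
def IsSortingNet {n : ℕ} (C : List (Fin n × Fin n)) : Prop :=
  Standard C ∧ ∀ x : Fin n → Bool, Monotone (runNet C x)

/-- The set of outputs of a comparator network on Boolean inputs. -/
def outputs {n : ℕ} (C : List (Fin n × Fin n)) : Set (Fin n → Bool) :=
  Set.range (runNet C)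

/-- The action of a permutation of channels on a set of Boolean vectors. -/
def permSet {n : ℕ} (π : Equiv.Perm (Fin n)) (S : Set (Fin n → Bool)) :
    Set (Fin n → Bool) :=
  (fun x => x ∘ ⇑π.symm) '' S

/-- `Ca` subsumes `Cb`: some permutation maps `outputs Ca` into `outputs Cb`. -/
def Subsumes {n : ℕ} (Ca Cb : List (Fin n × Fin n)) : Prop :=
  ∃ π : Equiv.Perm (Fin n), permSet π (outputs Ca) ⊆ outputs Cb

/-- `sortSize n` is the least size of a sorting network on `n` channels. -/
noncomputable def sortSize (n : ℕ) : ℕ :=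
  sInf {k | ∃ C : List (Fin n × Fin n), IsSortingNet C ∧ C.length = k}

/-- Number of ones in a Boolean vector. -/
def ones {n : ℕ} (x : Fin n → Bool) : ℕ :=
  (Finset.univ.filter fun i => x i = true).card

/-- A (finite) complete set of filters on `n` channels. -/
def CompleteFilters (n : ℕ) (F : Finset (List (Fin n × Fin n))) : Prop :=
  (∃ C : List (Fin n × Fin n), IsSortingNet C ∧ C.length = sortSize n) ↔
    (∃ C ∈ F, ∃ C' : List (Fin n × Fin n),
      IsSortingNet (C ++ C') ∧ (C ++ C').length = sortSize n)

/-- `wSet C x k` is the set of positions `i` such that some output vector of `C`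
with exactly `k` ones has value `x` at position `i`. -/
def wSet {n : ℕ} (C : List (Fin n × Fin n)) (x : Bool) (k : ℕ) : Set (Fin n) :=
  {i | ∃ v ∈ outputs C, ones v = k ∧ v i = x}

/-!
Relabelling the channels of `C` by `π⁻¹` gives a network `D` such that `Ca ++ D` sorts every
input up to the fixed permutation `π` of the output channels, because `π` carries the outputs
of `Ca` into those of `Cb`. The comparators of `D` may point downwards; untangling them (flip
the comparator and swap its two channels in the rest of the network) yields a standard network
`C'` of the same size such that `Ca ++ C'` still sorts up to a fixed permutation. A standard
network fixes every sorted input, and a sorted Boolean vector is determined by its number of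
ones, so that permutation is the identity.
-/

open Equiv

section

variable {n : ℕ} {α : Type*} [LinearOrder α]

lemma runNet_cons (c : Fin n × Fin n) (C : List (Fin n × Fin n)) (x : Fin n → α) :
    runNet (c :: C) x = runNet C (applyComp c x) := rfl

lemma runNet_append (A B : List (Fin n × Fin n)) (x : Fin n → α) :
    runNet (A ++ B) x = runNet B (runNet A x) :=
  List.foldl_append ..

lemma applyComp_relabel (e : Perm (Fin n)) (c : Fin n × Fin n) (x : Fin n → α) :
    applyComp (Prod.map e e c) (x ∘ e.symm) = applyComp c x ∘ e.symm := by
  funext k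
  simp [applyComp, ← Equiv.symm_apply_eq]

lemma runNet_relabel (e : Perm (Fin n)) (C : List (Fin n × Fin n)) (x : Fin n → α) :
    runNet (C.map (Prod.map e e)) (x ∘ e.symm) = runNet C x ∘ e.symm := by
  induction C generalizing x with
  | nil => rfl
  | cons c C ih => simp only [List.map_cons, runNet_cons, applyComp_relabel, ih]

lemma applyComp_swap (c : Fin n × Fin n) (x : Fin n → α) :
    applyComp (c.2, c.1) x = applyComp c x ∘ swap c.1 c.2 := by
  funext k
  simp only [applyComp, Function.comp_apply, swap_apply_def]
  split_ifs <;> simp_all [min_comm, max_comm]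

lemma applyComp_of_le {c : Fin n × Fin n} {x : Fin n → α} (h : x c.1 ≤ x c.2) :
    applyComp c x = x := by
  funext k
  simp only [applyComp]
  split_ifs <;> simp_all

lemma applyComp_of_ge {c : Fin n × Fin n} {x : Fin n → α} (h : x c.2 ≤ x c.1) :
    applyComp c x = x ∘ swap c.1 c.2 := by
  funext k
  simp only [applyComp, Function.comp_apply, swap_apply_def]
  split_ifs <;> simp_all

lemma runNet_of_monotone {C : List (Fin n × Fin n)} (hC : Standard C) {x : Fin n → α}
    (hx : Monotone x) : runNet C x = x := by
  induction C with
  | nil => rfl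
  | cons c C ih =>
    obtain ⟨hc, hC⟩ := List.forall_mem_cons.1 hC
    rw [runNet_cons, applyComp_of_le (hx hc.le), ih hC]

theorem exists_standard_runNet_eq_comp :
    ∀ G : List (Fin n × Fin n), (∀ c ∈ G, c.1 ≠ c.2) →
      ∃ (G' : List (Fin n × Fin n)) (ρ : Perm (Fin n)), Standard G' ∧
        G'.length = G.length ∧ ∀ x : Fin n → α, runNet G' x = runNet G x ∘ ρ
  | [], _ => ⟨[], 1, fun _ h => absurd h List.not_mem_nil, rfl, fun _ => rfl⟩
  | c :: B, hG => by
    rw [List.forall_mem_cons] at hG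
    rcases hG.1.lt_or_gt with hlt | hgt
    · obtain ⟨B', ρ, hstd, hlen, hrun⟩ := exists_standard_runNet_eq_comp B hG.2
      exact ⟨c :: B', ρ, List.forall_mem_cons.2 ⟨hlt, hstd⟩, by simp [hlen],
        fun x => by simp only [runNet_cons, hrun]⟩
    · set τ := swap c.1 c.2
      obtain ⟨B', ρ, hstd, hlen, hrun⟩ := exists_standard_runNet_eq_comp (B.map (Prod.map τ τ))
        (by
          simp only [List.mem_map]
          rintro _ ⟨d, hd, rfl⟩
          exact τ.injective.ne (hG.2 d hd))
      refine ⟨(c.2, c.1) :: B', τ * ρ, List.forall_mem_cons.2 ⟨hgt, hstd⟩, by simp [hlen],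
        fun x => ?_⟩
      have := runNet_relabel τ B (applyComp c x)
      rw [symm_swap] at this
      rw [runNet_cons, hrun, runNet_cons, applyComp_swap, this, Perm.coe_mul]
      rfl
termination_by G => G.length

lemma ones_comp_perm (x : Fin n → Bool) (σ : Perm (Fin n)) : ones (x ∘ σ) = ones x := by
  simp only [ones, Finset.card_filter]
  exact Equiv.sum_comp σ fun i => if x i = true then 1 else 0

lemma ones_applyComp (c : Fin n × Fin n) (x : Fin n → Bool) :
    ones (applyComp c x) = ones x := by
  rcases le_total (x c.1) (x c.2) with h | h
  · rw [applyComp_of_le h]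
  · rw [applyComp_of_ge h, ones_comp_perm]

lemma ones_runNet (C : List (Fin n × Fin n)) (x : Fin n → Bool) :
    ones (runNet C x) = ones x := by
  induction C generalizing x with
  | nil => rfl
  | cons c C ih => rw [runNet_cons, ih, ones_applyComp]

lemma ones_lt_ones_of_monotone {x y : Fin n → Bool} (hx : Monotone x) (hy : Monotone y)
    {i : Fin n} (hxi : x i = false) (hyi : y i = true) : ones x < ones y := by
  apply Finset.card_lt_card
  refine (Finset.ssubset_iff_of_subset fun j hj => ?_).2 ⟨i, by simpa, by simp [hxi]⟩
  simp only [Finset.mem_filter, Finset.mem_univ, true_and] at hj ⊢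
  rcases le_total i j with hij | hji
  · exact Bool.le_iff_imp.1 (hy hij) hyi
  · exact absurd (hx hji) (by simp [hj, hxi])

lemma Monotone.eq_of_ones_eq {x y : Fin n → Bool} (hx : Monotone x) (hy : Monotone y)
    (h : ones x = ones y) : x = y := by
  funext i
  cases hxi : x i <;> cases hyi : y i
  · rfl
  · exact absurd h (ones_lt_ones_of_monotone hx hy hxi hyi).ne
  · exact absurd h (ones_lt_ones_of_monotone hy hx hyi hxi).ne'
  · rfl

lemma perm_eq_one_of_forall_monotone_comp_eq {σ : Perm (Fin n)}
    (h : ∀ x : Fin n → Bool, Monotone x → x ∘ σ = x) : σ = 1 := by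
  have threshold (a : Fin n) : Monotone fun i => decide (a ≤ i) :=
    fun i j hij => Bool.le_iff_imp.2 fun hai => by simpa using (of_decide_eq_true hai).trans hij
  refine Equiv.ext fun k => le_antisymm ?_ ?_
  · simpa using congrFun (h _ (threshold (σ k))) k
  · simpa using congrFun (h _ (threshold k)) k

def SortsUpTo (C : List (Fin n × Fin n)) (σ : Perm (Fin n)) : Prop :=
  ∀ x : Fin n → Bool, ∃ s, Monotone s ∧ runNet C x = s ∘ σ

-- A standard network fixes sorted inputs, which forces the permutation to be trivial.
lemma Standard.monotone_runNet_of_sortsUpTo {C : List (Fin n × Fin n)} {σ : Perm (Fin n)}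
    (hC : Standard C) (h : SortsUpTo C σ) (x : Fin n → Bool) : Monotone (runNet C x) := by
  have hσ : σ = 1 := perm_eq_one_of_forall_monotone_comp_eq fun x hx => by
    obtain ⟨s, hs, hrun⟩ := h x
    rw [runNet_of_monotone hC hx] at hrun
    have hsx : s = x := hs.eq_of_ones_eq hx (by rw [← ones_comp_perm s σ, ← hrun])
    rw [hsx] at hrun
    exact hrun.symm
  obtain ⟨s, hs, hrun⟩ := h x
  simpa [hrun, hσ] using hs

lemma SortsUpTo.append_of_runNet_eq_comp {A D C : List (Fin n × Fin n)} {σ ρ : Perm (Fin n)}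
    (h : SortsUpTo (A ++ D) σ) (hrun : ∀ x : Fin n → Bool, runNet C x = runNet D x ∘ ρ) :
    SortsUpTo (A ++ C) (σ * ρ) := fun x => by
  obtain ⟨s, hs, hsx⟩ := h x
  refine ⟨s, hs, ?_⟩
  rw [runNet_append, hrun, ← runNet_append, hsx, Perm.coe_mul]
  rfl

lemma sortsUpTo_append_relabel {Ca Cb C : List (Fin n × Fin n)} {π : Perm (Fin n)}
    (hπ : permSet π (outputs Ca) ⊆ outputs Cb)
    (hsort : ∀ x : Fin n → Bool, Monotone (runNet (Cb ++ C) x)) :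
    SortsUpTo (Ca ++ C.map (Prod.map π.symm π.symm)) π := fun x => by
  obtain ⟨y, hy⟩ := hπ ⟨runNet Ca x, ⟨x, rfl⟩, rfl⟩
  refine ⟨runNet (Cb ++ C) y, hsort y, ?_⟩
  have := runNet_relabel π.symm C (runNet Ca x ∘ π.symm)
  rw [symm_symm, Function.comp_assoc, symm_comp_self, Function.comp_id] at this
  rw [runNet_append, runNet_append, hy, this]

end

theorem subsumption_preserves_extension_general (n k : ℕ) (Ca Cb : List (Fin n × Fin n))
    (hCa : Standard Ca) (hlen : Ca.length = Cb.length)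
    (hsub : Subsumes Ca Cb)
    (h : ∃ C : List (Fin n × Fin n), IsSortingNet (Cb ++ C) ∧ (Cb ++ C).length = k) :
    ∃ C' : List (Fin n × Fin n), IsSortingNet (Ca ++ C') ∧ (Ca ++ C').length = k := by
  obtain ⟨π, hπ⟩ := hsub
  obtain ⟨C, ⟨hstd, hsort⟩, rfl⟩ := h
  obtain ⟨C', ρ, hC', hlenC', hrun⟩ :=
    exists_standard_runNet_eq_comp (α := Bool) (C.map (Prod.map π.symm π.symm)) (by
      simp only [List.mem_map]
      rintro _ ⟨c, hc, rfl⟩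
      exact π.symm.injective.ne (hstd c (List.mem_append_right _ hc)).ne)
  have hstdAll : Standard (Ca ++ C') := List.forall_mem_append.2 ⟨hCa, hC'⟩
  have hsorts : SortsUpTo (Ca ++ C') (π * ρ) :=
    (sortsUpTo_append_relabel hπ hsort).append_of_runNet_eq_comp hrun
  exact ⟨C', ⟨hstdAll, hstdAll.monotone_runNet_of_sortsUpTo hsorts⟩, by simp [hlen, hlenC']⟩

/-- If `Ca` and `Cb` have the same size and `Ca` subsumes `Cb`, then any size-`k`
sorting network extending `Cb` yields a size-`k` sorting network extending `Ca`. -/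
theorem subsumption_preserves_extension (n k : ℕ) (Ca Cb : List (Fin n × Fin n))
    (hCa : Standard Ca) (hCb : Standard Cb) (hlen : Ca.length = Cb.length)
    (hsub : Subsumes Ca Cb)
    (h : ∃ C : List (Fin n × Fin n), IsSortingNet (Cb ++ C) ∧ (Cb ++ C).length = k) :
    ∃ C' : List (Fin n × Fin n), IsSortingNet (Ca ++ C') ∧ (Ca ++ C').length = k :=
  subsumption_preserves_extension_general n k Ca Cb hCa hlen hsub h
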